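/- arXiv:1410.6468 — 4 statements merged into one kernel-verified Lean document; each statement's English description precedes it below -/
import Mathlib

section
/- Let E and F be real topological vector spaces (or locally convex spaces), U ⊆ E_ℂ an open connected subset of the complexification of E with U ∩ E ≠ ∅, and f₁, f₂ : U → F_ℂ complex analytic maps. If f₁ and f₂ agree on E ∩ U, then f₁ = f₂ on all of U. -/
/-!
It suffices to see that two analytic maps agreeing on the real points of a ball `B` around a
real point `z₀` agree on `B`; the identity theorem then spreads this over the connected set `U`.
Given `y ∈ B`, write `y - z₀ = u + i v` with `u, v` real. Along the complex plane
`(s, t) ↦ z₀ + s u + t v` both maps become analytic functions of two complex variables that agree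
at real `(s, t)` near `0`; applying the one-variable identity theorem in each variable separately,
they agree on a small bidisc, hence on the convex preimage of `B`, which contains `(1, i)`.
-/

open Set Filter Topology Metric Complex ContinuousLinearMap

section

variable {G : Type*} [NormedAddCommGroup G] [NormedSpace ℂ G]

theorem eqOn_ball_of_eq_ofReal {φ₁ φ₂ : ℂ → G} {r : ℝ}
    (h₁ : AnalyticOnNhd ℂ φ₁ (ball 0 r)) (h₂ : AnalyticOnNhd ℂ φ₂ (ball 0 r))
    (h : ∀ x : ℝ, |x| < r → φ₁ x = φ₂ x) : EqOn φ₁ φ₂ (ball 0 r) := by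
  rcases le_or_gt r 0 with hr | hr
  · simp [ball_eq_empty.mpr hr]
  have hreal : ∀ᶠ x : ℝ in 𝓝[≠] 0, φ₁ x = φ₂ x :=
    nhdsWithin_le_nhds <| (eventually_abs_sub_lt 0 hr).mono fun x hx => h x (by simpa using hx)
  have hofReal : Tendsto ((↑) : ℝ → ℂ) (𝓝[≠] 0) (𝓝[≠] 0) :=
    continuous_ofReal.continuousWithinAt.tendsto_nhdsWithin fun x hx => by simpa using hx
  exact h₁.eqOn_of_preconnected_of_frequently_eq h₂ (convex_ball 0 r).isPreconnected
    (mem_ball_self hr) (hofReal.frequently hreal.frequently)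

theorem eqOn_ball_of_eq_ofReal_prod {h₁ h₂ : ℂ × ℂ → G} {r : ℝ}
    (hh₁ : AnalyticOnNhd ℂ h₁ (ball 0 r)) (hh₂ : AnalyticOnNhd ℂ h₂ (ball 0 r))
    (h : ∀ x y : ℝ, |x| < r → |y| < r → h₁ (x, y) = h₂ (x, y)) : EqOn h₁ h₂ (ball 0 r) := by
  have mem_ball_prod {s t : ℂ} : (s, t) ∈ ball (0 : ℂ × ℂ) r ↔ ‖s‖ < r ∧ ‖t‖ < r := by
    rw [mem_ball_zero_iff, Prod.norm_def, max_lt_iff]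
  have slice_snd {h : ℂ × ℂ → G} (hh : AnalyticOnNhd ℂ h (ball 0 r)) {s : ℂ} (hs : ‖s‖ < r) :
      AnalyticOnNhd ℂ (fun t => h (s, t)) (ball 0 r) :=
    hh.comp (analyticOnNhd_const.prod analyticOnNhd_id)
      fun t ht => mem_ball_prod.2 ⟨hs, mem_ball_zero_iff.1 ht⟩
  have slice_fst {h : ℂ × ℂ → G} (hh : AnalyticOnNhd ℂ h (ball 0 r)) {t : ℂ} (ht : ‖t‖ < r) :
      AnalyticOnNhd ℂ (fun s => h (s, t)) (ball 0 r) :=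
    hh.comp (analyticOnNhd_id.prod analyticOnNhd_const)
      fun s hs => mem_ball_prod.2 ⟨mem_ball_zero_iff.1 hs, ht⟩
  rintro ⟨s, t⟩ hst
  obtain ⟨hs, ht⟩ := mem_ball_prod.1 hst
  have real_fst (x : ℝ) (hx : |x| < r) : h₁ (x, t) = h₂ (x, t) := by
    have hx' : ‖(x : ℂ)‖ < r := by rwa [norm_real, Real.norm_eq_abs]
    exact eqOn_ball_of_eq_ofReal (slice_snd hh₁ hx') (slice_snd hh₂ hx') (h x · hx)
      (mem_ball_zero_iff.2 ht)
  exact eqOn_ball_of_eq_ofReal (slice_fst hh₁ ht) (slice_fst hh₂ ht) real_fst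
    (mem_ball_zero_iff.2 hs)

end

theorem exists_eq_add_I_smul_of_span_range_eq_top {E V : Type*} [AddCommGroup E] [Module ℝ E]
    [AddCommGroup V] [Module ℂ V] (ι : E →ₗ[ℝ] V)
    (hspan : Submodule.span ℂ (range ι) = ⊤) (y : V) : ∃ u v, y = ι u + I • ι v := by
  have hy : y ∈ Submodule.span ℂ (range ι) := hspan ▸ Submodule.mem_top
  induction hy using Submodule.span_induction with
  | mem _ hx =>
    obtain ⟨u, rfl⟩ := hx
    exact ⟨u, 0, by simp⟩
  | zero => exact ⟨0, 0, by simp⟩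
  | add _ _ _ _ hx hy =>
    obtain ⟨u, v, rfl⟩ := hx
    obtain ⟨u', v', rfl⟩ := hy
    exact ⟨u + u', v + v', by simp only [map_add, smul_add]; abel⟩
  | smul c _ _ hx =>
    obtain ⟨u, v, rfl⟩ := hx
    refine ⟨c.re • u - c.im • v, c.im • u + c.re • v, ?_⟩
    simp only [map_add, map_sub, map_smul, ← coe_smul]
    conv_lhs => rw [← re_add_im c]
    linear_combination (norm := module) I_mul_I • ((c.im : ℂ) • ι v)

theorem eqOn_ball_of_eqOn_range {E Fc Gc : Type*} [AddCommGroup E] [Module ℝ E]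
    [NormedAddCommGroup Fc] [NormedSpace ℂ Fc] [NormedAddCommGroup Gc] [NormedSpace ℂ Gc]
    (ι : E →ₗ[ℝ] Fc) (hspan : Submodule.span ℂ (range ι) = ⊤) {z₀ : Fc} (hz₀ : z₀ ∈ range ι)
    {ρ : ℝ} {f₁ f₂ : Fc → Gc} (h₁ : AnalyticOnNhd ℂ f₁ (ball z₀ ρ))
    (h₂ : AnalyticOnNhd ℂ f₂ (ball z₀ ρ)) (h : ∀ x ∈ range ι ∩ ball z₀ ρ, f₁ x = f₂ x) :
    EqOn f₁ f₂ (ball z₀ ρ) := by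
  intro y hy
  obtain ⟨e, rfl⟩ := hz₀
  obtain ⟨u, v, huv⟩ := exists_eq_add_I_smul_of_span_range_eq_top ι hspan (y - ι e)
  set L : ℂ × ℂ →L[ℂ] Fc := (toSpanSingleton ℂ (ι u)).coprod (toSpanSingleton ℂ (ι v))
  set W := L ⁻¹' ball 0 ρ
  have hW : IsOpen W := isOpen_ball.preimage L.continuous
  have hWconv : Convex ℝ W :=
    (convex_ball 0 ρ).linear_preimage ((L : ℂ × ℂ →ₗ[ℂ] Fc).restrictScalars ℝ)
  have hmaps : MapsTo (fun p => ι e + L p) W (ball (ι e) ρ) := fun p hp => by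
    simpa [W, dist_eq_norm] using hp
  have hA : AnalyticOnNhd ℂ (fun p => ι e + L p) W := analyticOnNhd_const.add (L.analyticOnNhd W)
  have h0W : (0 : ℂ × ℂ) ∈ W := by simpa [W] using pos_of_mem_ball hy
  obtain ⟨r, hr, hrW⟩ := isOpen_iff.mp hW 0 h0W
  have hreal (s t : ℝ) : ι e + L (s, t) ∈ range ι :=
    ⟨e + s • u + t • v, by simp [L, ← coe_smul, add_assoc]⟩
  have hnear : (fun p => f₁ (ι e + L p)) =ᶠ[𝓝 0] fun p => f₂ (ι e + L p) :=
    eventually_of_mem (ball_mem_nhds 0 hr) <|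
      eqOn_ball_of_eq_ofReal_prod ((h₁.comp hA hmaps).mono hrW) ((h₂.comp hA hmaps).mono hrW)
        fun s t hs ht =>
          h _ ⟨hreal s t, hmaps (hrW (by simpa [Prod.norm_def] using And.intro hs ht))⟩
  have hyW : ((1 : ℂ), I) ∈ W := by simpa [W, L, ← huv, dist_eq_norm] using hy
  have key := (h₁.comp hA hmaps).eqOn_of_preconnected_of_eventuallyEq (h₂.comp hA hmaps)
    hWconv.isPreconnected h0W hnear hyW
  simpa [L, ← huv] using key

theorem stmt7_general {E : Type*} [NormedAddCommGroup E] [NormedSpace ℝ E]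
    {Fc Gc : Type*} [NormedAddCommGroup Fc] [NormedSpace ℂ Fc]
    [NormedAddCommGroup Gc] [NormedSpace ℂ Gc]
    (ι : E →ₗ[ℝ] Fc)
    (hspan : Submodule.span ℂ (Set.range ι) = ⊤)
    {U : Set Fc} (hU : IsOpen U) (hconn : IsConnected U)
    (hne : (Set.range ι ∩ U).Nonempty)
    {f₁ f₂ : Fc → Gc} (h₁ : AnalyticOnNhd ℂ f₁ U) (h₂ : AnalyticOnNhd ℂ f₂ U)
    (hagree : ∀ x ∈ Set.range ι ∩ U, f₁ x = f₂ x) :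
    Set.EqOn f₁ f₂ U := by
  obtain ⟨z₀, hz₀, hz₀U⟩ := hne
  obtain ⟨ρ, hρ, hball⟩ := isOpen_iff.mp hU z₀ hz₀U
  have hlocal : EqOn f₁ f₂ (ball z₀ ρ) :=
    eqOn_ball_of_eqOn_range ι hspan hz₀ (h₁.mono hball) (h₂.mono hball)
      fun x hx => hagree x ⟨hx.1, hball hx.2⟩
  exact h₁.eqOn_of_preconnected_of_eventuallyEq h₂ hconn.isPreconnected hz₀U
    (eventually_of_mem (ball_mem_nhds z₀ hρ) hlocal)

/-- Identity Theorem for complex analytic maps on the complexification: if two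
complex analytic maps on a connected open subset `U` of the complexification `Fc`
of `E` (with `E` realized as the fixed points of the conjugation `σ`, a totally
real generating subspace) agree on `E ∩ U ≠ ∅`, then they agree on `U`. -/
theorem stmt7 {E : Type*} [NormedAddCommGroup E] [NormedSpace ℝ E]
    {Fc Gc : Type*} [NormedAddCommGroup Fc] [NormedSpace ℂ Fc]
    [NormedAddCommGroup Gc] [NormedSpace ℂ Gc]
    (ι : E →ₗ[ℝ] Fc) (σ : Fc →ₗ[ℝ] Fc)
    (hσσ : σ ∘ σ = id)
    (hσi : ∀ x : Fc, σ ((Complex.I : ℂ) • x) = -((Complex.I : ℂ) • σ x))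
    (hfix : Set.range ι = {x : Fc | σ x = x})
    (hspan : Submodule.span ℂ (Set.range ι) = ⊤)
    {U : Set Fc} (hU : IsOpen U) (hconn : IsConnected U)
    (hne : (Set.range ι ∩ U).Nonempty)
    {f₁ f₂ : Fc → Gc} (h₁ : AnalyticOnNhd ℂ f₁ U) (h₂ : AnalyticOnNhd ℂ f₂ U)
    (hagree : ∀ x ∈ Set.range ι ∩ U, f₁ x = f₂ x) :
    Set.EqOn f₁ f₂ U :=
  stmt7_general ι hspan hU hconn hne h₁ h₂ hagree
end

section
/- Let (E_n)_{n∈ℕ} and (F_n)_{n∈ℕ} be increasing sequences of locally convex (e.g. Banach) spaces with continuous injective bonding maps, whose locally convex direct limits E = ⋃_n E_n and F = ⋃_n F_n are both compactly regular. Then the product E × F with the product topology equals the locally convex direct limit of (E_n × F_n)_{n∈ℕ}, and the sequence (E_n × F_n) is compactly regular. -/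
/-!
Compact regularity forces the limits to be Hausdorff: the closure of `{0}` is a compact
subspace, so it is the image of a compact subspace of a normed step, which must be `0`.
Once Hausdorff, the closed graph theorem makes the linking maps between the Banach steps
continuous, so a compact set that is compact in one step stays compact in all later steps.
A compact `C ⊆ E × F` has compact projections; these are compact in a common step `n`, and
the preimage of `C` in `E_n × F_n` is a closed subset of the product of the two compact
preimages. For the topology, a convex `S ⊆ E × F` contains `½ A × ½ B`, where `A` and `B`
are its traces on the two axes, and these traces are convex neighbourhoods of `0` by the
final topologies of `E` and `F`.
-/

open Set Filter Topology Function
open scoped Pointwise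

section DirectLimits

variable {ι : Type*} {X : ι → Type*} {E : Type*} [TopologicalSpace E]

def IsCompactlyRegular [∀ i, TopologicalSpace (X i)] (f : ∀ i, X i → E) : Prop :=
  ∀ C : Set E, IsCompact C → ∃ i, C ⊆ range (f i) ∧ IsCompact (f i ⁻¹' C)

/-- For a locally convex `E` and continuous linear `f i`, this says that `E` carries the finest
locally convex topology making all `f i` continuous. -/
def IsLocallyConvexFinal [AddCommMonoid E] [Module ℝ E] [∀ i, TopologicalSpace (X i)]
    [∀ i, Zero (X i)] (f : ∀ i, X i → E) : Prop :=
  ∀ S : Set E, Convex ℝ S → (S ∈ 𝓝 (0 : E) ↔ ∀ i, f i ⁻¹' S ∈ 𝓝 (0 : X i))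

end DirectLimits

section LocallyConvexFinal

variable {E F : Type*} [AddCommGroup E] [Module ℝ E] [TopologicalSpace E]
  [ContinuousConstSMul ℝ E] [AddCommGroup F] [Module ℝ F] [TopologicalSpace F]
  [ContinuousConstSMul ℝ F]

theorem Convex.mem_nhds_zero_of_inl_inr {S : Set (E × F)} (hS : Convex ℝ S)
    (hE : LinearMap.inl ℝ E F ⁻¹' S ∈ 𝓝 0) (hF : LinearMap.inr ℝ E F ⁻¹' S ∈ 𝓝 0) :
    S ∈ 𝓝 0 := by
  have hhalf : (2 : ℝ)⁻¹ ≠ 0 := by norm_num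
  have hsub : ((2 : ℝ)⁻¹ • (LinearMap.inl ℝ E F ⁻¹' S)) ×ˢ
      ((2 : ℝ)⁻¹ • (LinearMap.inr ℝ E F ⁻¹' S)) ⊆ S := by
    rintro ⟨-, -⟩ ⟨⟨a, ha, rfl⟩, ⟨b, hb, rfl⟩⟩
    convert hS ha hb (by norm_num : (0 : ℝ) ≤ 2⁻¹) (by norm_num : (0 : ℝ) ≤ 2⁻¹) (by norm_num)
      using 1
    simp
  exact mem_of_superset (prod_mem_nhds ((set_smul_mem_nhds_zero_iff hhalf).2 hE)
    ((set_smul_mem_nhds_zero_iff hhalf).2 hF)) hsub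

variable {ι : Type*} {X Y : ι → Type*} [∀ i, AddCommGroup (X i)] [∀ i, Module ℝ (X i)]
  [∀ i, TopologicalSpace (X i)] [∀ i, AddCommGroup (Y i)] [∀ i, Module ℝ (Y i)]
  [∀ i, TopologicalSpace (Y i)]

theorem IsLocallyConvexFinal.prodMap {f : ∀ i, X i →L[ℝ] E} {g : ∀ i, Y i →L[ℝ] F}
    (hf : IsLocallyConvexFinal fun i => ⇑(f i)) (hg : IsLocallyConvexFinal fun i => ⇑(g i)) :
    IsLocallyConvexFinal fun i => ⇑((f i).prodMap (g i)) := by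
  refine fun S hS => ⟨fun hS0 i => ?_, fun h => hS.mem_nhds_zero_of_inl_inr ?_ ?_⟩
  · exact ((f i).prodMap (g i)).continuous.continuousAt.preimage_mem_nhds (by rwa [map_zero])
  · refine (hf _ (hS.linear_preimage _)).2 fun i => ?_
    have hslice : f i ⁻¹' (LinearMap.inl ℝ E F ⁻¹' S) =
        ContinuousLinearMap.inl ℝ (X i) (Y i) ⁻¹' ((f i).prodMap (g i) ⁻¹' S) := by
      ext
      simp
    exact hslice ▸ (ContinuousLinearMap.inl ℝ (X i) (Y i)).continuous.tendsto' 0 0 rfl (h i)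
  · refine (hg _ (hS.linear_preimage _)).2 fun i => ?_
    have hslice : g i ⁻¹' (LinearMap.inr ℝ E F ⁻¹' S) =
        ContinuousLinearMap.inr ℝ (X i) (Y i) ⁻¹' ((f i).prodMap (g i) ⁻¹' S) := by
      ext
      simp
    exact hslice ▸ (ContinuousLinearMap.inr ℝ (X i) (Y i)).continuous.tendsto' 0 0 rfl (h i)

end LocallyConvexFinal

section LinkingMaps

variable {𝕜 : Type*} [NontriviallyNormedField 𝕜]
  {E : Type*} [AddCommGroup E] [Module 𝕜 E] [TopologicalSpace E]
  {X Y : Type*} [NormedAddCommGroup X] [NormedSpace 𝕜 X] [NormedAddCommGroup Y]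
  [NormedSpace 𝕜 Y]

theorem Submodule.eq_bot_of_isCompact {p : Submodule 𝕜 X} (hp : IsCompact (p : Set X)) :
    p = ⊥ := by
  by_contra hne
  have := Submodule.nontrivial_iff_ne_bot.2 hne
  have := isCompact_iff_compactSpace.1 hp
  exact (NormedSpace.noncompactSpace 𝕜 p).noncompact_univ isCompact_univ

theorem ContinuousLinearMap.exists_comp_eq_of_range_subset [CompleteSpace X] [CompleteSpace Y]
    [T2Space E] (f : X →L[𝕜] E) {g : Y →L[𝕜] E} (hg : Injective g) (hfg : range f ⊆ range g) :
    ∃ u : X →L[𝕜] Y, g ∘L u = f := by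
  let u : X →ₗ[𝕜] Y := (LinearEquiv.ofInjective (g : Y →ₗ[𝕜] E) hg).symm.toLinearMap ∘ₗ
    (f : X →ₗ[𝕜] E).codRestrict (LinearMap.range (g : Y →ₗ[𝕜] E)) fun x => hfg ⟨x, rfl⟩
  have hu : ∀ x, g (u x) = f x := fun x =>
    LinearEquiv.ofInjective_symm_apply (g : Y →ₗ[𝕜] E) (h := hg) _
  have hgraph : (u.graph : Set (X × Y)) = {p | f p.1 = g p.2} := by
    ext p
    simp only [SetLike.mem_coe, LinearMap.mem_graph_iff, mem_ofPred_eq, ← hu]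
    exact ⟨fun h => h ▸ rfl, fun h => hg h.symm⟩
  have hcont : Continuous u := u.continuous_of_isClosed_graph <| by
    rw [hgraph]
    exact isClosed_eq (map_continuous f |>.comp continuous_fst)
      (map_continuous g |>.comp continuous_snd)
  exact ⟨⟨u, hcont⟩, ContinuousLinearMap.ext hu⟩

theorem isCompact_preimage_of_range_subset [CompleteSpace X] [CompleteSpace Y] [T2Space E]
    {f : X →L[𝕜] E} {g : Y →L[𝕜] E} (hg : Injective g) (hfg : range f ⊆ range g) {C : Set E}
    (hC : C ⊆ range f) (hK : IsCompact (f ⁻¹' C)) : IsCompact (g ⁻¹' C) := by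
  obtain ⟨u, rfl⟩ := f.exists_comp_eq_of_range_subset hg hfg
  have himage : g ⁻¹' C = u '' ((g ∘L u) ⁻¹' C) := by
    ext y
    refine ⟨fun hy => ?_, fun ⟨x, hx, hxy⟩ => hxy ▸ hx⟩
    obtain ⟨x, hx⟩ := hC hy
    exact ⟨x, by simpa [hx] using hy, hg (by simpa using hx)⟩
  rw [himage]
  exact hK.image u.continuous

end LinkingMaps

section CompactlyRegular

variable {𝕜 : Type*} [NontriviallyNormedField 𝕜]
  {E : Type*} [AddCommGroup E] [Module 𝕜 E] [TopologicalSpace E]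

theorem IsCompactlyRegular.t2Space [IsTopologicalAddGroup E] [ContinuousSMul 𝕜 E] {ι : Type*}
    {V : ι → Type*} [∀ i, NormedAddCommGroup (V i)] [∀ i, NormedSpace 𝕜 (V i)]
    {f : ∀ i, V i →L[𝕜] E} (hreg : IsCompactlyRegular fun i => ⇑(f i)) : T2Space E := by
  let N := (⊥ : Submodule 𝕜 E).topologicalClosure
  have hN : IsCompact (N : Set E) := by
    rw [Submodule.topologicalClosure_coe, Submodule.bot_coe]
    exact isCompact_singleton.closure
  obtain ⟨i, hNf, hK⟩ := hreg _ hN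
  have hbot : N.comap (f i : V i →ₗ[𝕜] E) = ⊥ := Submodule.eq_bot_of_isCompact hK
  rw [IsTopologicalAddGroup.t2Space_iff_zero_closed, ← closure_subset_iff_isClosed]
  intro z hz
  have hzN : z ∈ N := by
    rwa [← SetLike.mem_coe, Submodule.topologicalClosure_coe, Submodule.bot_coe]
  obtain ⟨x, rfl⟩ := hNf hzN
  have hx : x ∈ N.comap (f i : V i →ₗ[𝕜] E) := hzN
  rw [hbot, Submodule.mem_bot] at hx
  simp [hx]

variable {X : ℕ → Type*} [∀ n, NormedAddCommGroup (X n)] [∀ n, NormedSpace 𝕜 (X n)]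
  [∀ n, CompleteSpace (X n)]

theorem IsCompactlyRegular.eventually [T2Space E] {f : ∀ n, X n →L[𝕜] E}
    (hreg : IsCompactlyRegular fun n => ⇑(f n)) (hinj : ∀ n, Injective (f n))
    (hmono : Monotone fun n => range (f n)) {C : Set E} (hC : IsCompact C) :
    ∀ᶠ n in atTop, C ⊆ range (f n) ∧ IsCompact (f n ⁻¹' C) := by
  obtain ⟨n, hCn, hKn⟩ := hreg C hC
  filter_upwards [eventually_ge_atTop n] with m hm
  exact ⟨hCn.trans (hmono hm), isCompact_preimage_of_range_subset (hinj m) (hmono hm) hCn hKn⟩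

variable [IsTopologicalAddGroup E] [ContinuousSMul 𝕜 E]
  {F : Type*} [AddCommGroup F] [Module 𝕜 F] [TopologicalSpace F] [IsTopologicalAddGroup F]
  [ContinuousSMul 𝕜 F]
  {Y : ℕ → Type*} [∀ n, NormedAddCommGroup (Y n)] [∀ n, NormedSpace 𝕜 (Y n)]
  [∀ n, CompleteSpace (Y n)]

theorem IsCompactlyRegular.prodMap {f : ∀ n, X n →L[𝕜] E} {g : ∀ n, Y n →L[𝕜] F}
    (hf : IsCompactlyRegular fun n => ⇑(f n)) (hg : IsCompactlyRegular fun n => ⇑(g n))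
    (hfinj : ∀ n, Injective (f n)) (hginj : ∀ n, Injective (g n))
    (hfmono : Monotone fun n => range (f n)) (hgmono : Monotone fun n => range (g n)) :
    IsCompactlyRegular fun n => ⇑((f n).prodMap (g n)) := by
  have := hf.t2Space
  have := hg.t2Space
  intro C hC
  obtain ⟨n, ⟨hCf, hKf⟩, hCg, hKg⟩ :=
    ((hf.eventually hfinj hfmono (hC.image continuous_fst)).and
      (hg.eventually hginj hgmono (hC.image continuous_snd))).exists
  refine ⟨n, ?_, ?_⟩
  · change C ⊆ range (Prod.map (f n) (g n))
    rw [range_prodMap]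
    exact subset_prod.trans (prod_mono hCf hCg)
  · change IsCompact (Prod.map (f n) (g n) ⁻¹' C)
    refine (hKf.prod hKg).of_isClosed_subset
      (hC.isClosed.preimage ((f n).continuous.prodMap (g n).continuous)) ?_
    rw [← preimage_prod_map_prod]
    exact preimage_mono subset_prod

end CompactlyRegular

theorem stmt13_general {E F : Type*}
    [AddCommGroup E] [Module ℝ E] [TopologicalSpace E] [IsTopologicalAddGroup E]
    [ContinuousSMul ℝ E]
    [AddCommGroup F] [Module ℝ F] [TopologicalSpace F] [IsTopologicalAddGroup F]
    [ContinuousSMul ℝ F]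
    (En Fn : ℕ → Type*)
    [∀ n, NormedAddCommGroup (En n)] [∀ n, NormedSpace ℝ (En n)]
    [∀ n, CompleteSpace (En n)]
    [∀ n, NormedAddCommGroup (Fn n)] [∀ n, NormedSpace ℝ (Fn n)]
    [∀ n, CompleteSpace (Fn n)]
    (f : ∀ n, En n →L[ℝ] E) (g : ∀ n, Fn n →L[ℝ] F)
    (hfinj : ∀ n, Function.Injective (f n)) (hginj : ∀ n, Function.Injective (g n))
    (hfmono : ∀ n, Set.range (f n) ⊆ Set.range (f (n + 1)))
    (hgmono : ∀ n, Set.range (g n) ⊆ Set.range (g (n + 1)))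
    -- `E` and `F` carry the locally convex direct limit topologies:
    (hEfinal : ∀ S : Set E, Convex ℝ S →
      (S ∈ nhds (0 : E) ↔ ∀ n, (f n) ⁻¹' S ∈ nhds (0 : En n)))
    (hFfinal : ∀ S : Set F, Convex ℝ S →
      (S ∈ nhds (0 : F) ↔ ∀ n, (g n) ⁻¹' S ∈ nhds (0 : Fn n)))
    -- compact regularity of both limits:
    (hEreg : ∀ C : Set E, IsCompact C → ∃ n, C ⊆ Set.range (f n) ∧
      IsCompact ((f n) ⁻¹' C))
    (hFreg : ∀ C : Set F, IsCompact C → ∃ n, C ⊆ Set.range (g n) ∧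
      IsCompact ((g n) ⁻¹' C)) :
    -- the product topology on `E × F` is the direct limit topology of the products:
    (∀ S : Set (E × F), Convex ℝ S →
      (S ∈ nhds (0 : E × F) ↔
        ∀ n, ((f n).prodMap (g n)) ⁻¹' S ∈ nhds (0 : En n × Fn n))) ∧
    -- and the sequence of products is compactly regular:
    (∀ C : Set (E × F), IsCompact C → ∃ n, C ⊆ Set.range ((f n).prodMap (g n)) ∧
      IsCompact (((f n).prodMap (g n)) ⁻¹' C)) :=
  ⟨IsLocallyConvexFinal.prodMap hEfinal hFfinal,
    IsCompactlyRegular.prodMap hEreg hFreg hfinj hginj (monotone_nat_of_le_succ hfmono)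
      (monotone_nat_of_le_succ hgmono)⟩

/-- Products of compactly regular direct limits of Banach spaces: the product of
the limits carries the direct limit topology of the products of the steps, and the
sequence of products is compactly regular. -/
theorem stmt13 {E F : Type*}
    [AddCommGroup E] [Module ℝ E] [TopologicalSpace E] [IsTopologicalAddGroup E]
    [ContinuousSMul ℝ E]
    [AddCommGroup F] [Module ℝ F] [TopologicalSpace F] [IsTopologicalAddGroup F]
    [ContinuousSMul ℝ F]
    (En Fn : ℕ → Type*)
    [∀ n, NormedAddCommGroup (En n)] [∀ n, NormedSpace ℝ (En n)]
    [∀ n, CompleteSpace (En n)]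
    [∀ n, NormedAddCommGroup (Fn n)] [∀ n, NormedSpace ℝ (Fn n)]
    [∀ n, CompleteSpace (Fn n)]
    (f : ∀ n, En n →L[ℝ] E) (g : ∀ n, Fn n →L[ℝ] F)
    (hfinj : ∀ n, Function.Injective (f n)) (hginj : ∀ n, Function.Injective (g n))
    (hfmono : ∀ n, Set.range (f n) ⊆ Set.range (f (n + 1)))
    (hgmono : ∀ n, Set.range (g n) ⊆ Set.range (g (n + 1)))
    (hfunion : (⋃ n, Set.range (f n)) = Set.univ)
    (hgunion : (⋃ n, Set.range (g n)) = Set.univ)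
    -- `E` and `F` carry the locally convex direct limit topologies:
    (hEfinal : ∀ S : Set E, Convex ℝ S →
      (S ∈ nhds (0 : E) ↔ ∀ n, (f n) ⁻¹' S ∈ nhds (0 : En n)))
    (hFfinal : ∀ S : Set F, Convex ℝ S →
      (S ∈ nhds (0 : F) ↔ ∀ n, (g n) ⁻¹' S ∈ nhds (0 : Fn n)))
    -- compact regularity of both limits:
    (hEreg : ∀ C : Set E, IsCompact C → ∃ n, C ⊆ Set.range (f n) ∧
      IsCompact ((f n) ⁻¹' C))
    (hFreg : ∀ C : Set F, IsCompact C → ∃ n, C ⊆ Set.range (g n) ∧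
      IsCompact ((g n) ⁻¹' C)) :
    -- the product topology on `E × F` is the direct limit topology of the products:
    (∀ S : Set (E × F), Convex ℝ S →
      (S ∈ nhds (0 : E × F) ↔
        ∀ n, ((f n).prodMap (g n)) ⁻¹' S ∈ nhds (0 : En n × Fn n))) ∧
    -- and the sequence of products is compactly regular:
    (∀ C : Set (E × F), IsCompact C → ∃ n, C ⊆ Set.range ((f n).prodMap (g n)) ∧
      IsCompact (((f n).prodMap (g n)) ⁻¹' C)) :=
  stmt13_general En Fn f g hfinj hginj hfmono hgmono hEfinal hFfinal hEreg hFreg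
end

section
/- Let (E_n) and (F_n) be sequences of locally convex spaces with continuous bonding maps E_n → E_{n+1}, F_n → F_{n+1}, and topological embeddings τ_n : E_n → F_n making all squares commute. Assume E_m ∩ τ⁻¹_n(F_n) ⊆ E_n for all m, n ∈ ℕ (where intersections are taken inside the direct limits), and that (F_n) is compactly regular. Then (E_n) is compactly regular: every compact subset of the direct limit ⋃_n E_n lies in and is compact in some E_n. -/
/-!
A compact `C ⊆ E` maps to the compact `τ '' C`, which lies and is compact in some `Fₙ`.
Every point of `C` lies in some `E_m` and is sent by `τ` into `Fₙ`, so `C ⊆ Eₙ` by the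
intersection hypothesis. Inside `Eₙ` the set `C` is carried by the embedding `τₙ` onto the
preimage of `τ '' C` in `Fₙ`, which is compact; an embedding reflects compactness.
-/

open Set

theorem Set.image_preimage_eq_preimage_image_of_comm {α β γ δ : Type*}
    {f : α → β} {g : γ → δ} {i : α → γ} {j : β → δ}
    (hcomm : ∀ x, j (f x) = g (i x)) (hj : Function.Injective j)
    {C : Set γ} (hC : C ⊆ range i) :
    f '' (i ⁻¹' C) = j ⁻¹' (g '' C) := by
  ext y
  constructor
  · rintro ⟨x, hx, rfl⟩
    exact ⟨i x, hx, (hcomm x).symm⟩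
  · rintro ⟨c, hc, hy⟩
    obtain ⟨x, rfl⟩ := hC hc
    exact ⟨x, hc, hj (by rw [hcomm, hy])⟩

theorem stmt14_general {E F : Type*}
    [AddCommGroup E] [Module ℝ E] [TopologicalSpace E]
    [AddCommGroup F] [Module ℝ F] [TopologicalSpace F]
    (En Fn : ℕ → Type*)
    [∀ n, AddCommGroup (En n)] [∀ n, Module ℝ (En n)] [∀ n, TopologicalSpace (En n)]
    [∀ n, AddCommGroup (Fn n)] [∀ n, Module ℝ (Fn n)] [∀ n, TopologicalSpace (Fn n)]
    (eE : ∀ n, En n →L[ℝ] E) (eF : ∀ n, Fn n →L[ℝ] F)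
    (hFinj : ∀ n, Function.Injective (eF n))
    (hEunion : (⋃ n, Set.range (eE n)) = Set.univ)
    (τ : E →L[ℝ] F) (τn : ∀ n, En n →L[ℝ] Fn n)
    (hemb : ∀ n, Topology.IsEmbedding (τn n))
    (hcomm : ∀ n (x : En n), eF n (τn n x) = τ (eE n x))
    -- `E_m ∩ τ⁻¹(F_n) ⊆ E_n` inside the direct limits:
    (hcap : ∀ m n, Set.range (eE m) ∩ τ ⁻¹' (Set.range (eF n)) ⊆ Set.range (eE n))
    -- `(Fₙ)` is compactly regular:
    (hFreg : ∀ C : Set F, IsCompact C → ∃ n, C ⊆ Set.range (eF n) ∧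
      IsCompact ((eF n) ⁻¹' C)) :
    ∀ C : Set E, IsCompact C → ∃ n, C ⊆ Set.range (eE n) ∧
      IsCompact ((eE n) ⁻¹' C) := by
  intro C hC
  obtain ⟨n, hτC, hτCn⟩ := hFreg (τ '' C) (hC.image τ.continuous)
  have hCn : C ⊆ range (eE n) := fun c hc => by
    obtain ⟨m, hcm⟩ := mem_iUnion.1 (hEunion ▸ mem_univ c)
    exact hcap m n ⟨hcm, hτC (mem_image_of_mem τ hc)⟩
  refine ⟨n, hCn, ?_⟩
  rwa [(hemb n).isCompact_iff,
    image_preimage_eq_preimage_image_of_comm (hcomm n) (hFinj n) hCn]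

/-- Compact regularity passes to a compatible sequence of topologically embedded
steps: if `τₙ : Eₙ → Fₙ` are topological embeddings compatible with the inclusions
into the limits, `E_m ∩ τ⁻¹(Fₙ) ⊆ Eₙ` inside the limits, and `(Fₙ)` is compactly
regular, then `(Eₙ)` is compactly regular. -/
theorem stmt14 {E F : Type*}
    [AddCommGroup E] [Module ℝ E] [TopologicalSpace E] [IsTopologicalAddGroup E]
    [ContinuousSMul ℝ E]
    [AddCommGroup F] [Module ℝ F] [TopologicalSpace F] [IsTopologicalAddGroup F]
    [ContinuousSMul ℝ F]
    (En Fn : ℕ → Type*)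
    [∀ n, AddCommGroup (En n)] [∀ n, Module ℝ (En n)] [∀ n, TopologicalSpace (En n)]
    [∀ n, AddCommGroup (Fn n)] [∀ n, Module ℝ (Fn n)] [∀ n, TopologicalSpace (Fn n)]
    (eE : ∀ n, En n →L[ℝ] E) (eF : ∀ n, Fn n →L[ℝ] F)
    (hEinj : ∀ n, Function.Injective (eE n)) (hFinj : ∀ n, Function.Injective (eF n))
    (hEmono : ∀ n, Set.range (eE n) ⊆ Set.range (eE (n + 1)))
    (hFmono : ∀ n, Set.range (eF n) ⊆ Set.range (eF (n + 1)))
    (hEunion : (⋃ n, Set.range (eE n)) = Set.univ)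
    (τ : E →L[ℝ] F) (τn : ∀ n, En n →L[ℝ] Fn n)
    (hemb : ∀ n, Topology.IsEmbedding (τn n))
    (hcomm : ∀ n (x : En n), eF n (τn n x) = τ (eE n x))
    -- `E_m ∩ τ⁻¹(F_n) ⊆ E_n` inside the direct limits:
    (hcap : ∀ m n, Set.range (eE m) ∩ τ ⁻¹' (Set.range (eF n)) ⊆ Set.range (eE n))
    -- `(Fₙ)` is compactly regular:
    (hFreg : ∀ C : Set F, IsCompact C → ∃ n, C ⊆ Set.range (eF n) ∧
      IsCompact ((eF n) ⁻¹' C)) :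
    ∀ C : Set E, IsCompact C → ∃ n, C ⊆ Set.range (eE n) ∧
      IsCompact ((eE n) ⁻¹' C) :=
  stmt14_general En Fn eE eF hFinj hEunion τ τn hemb hcomm hcap hFreg
end

section
/- Let E = ⋃_n E_n be a compactly regular locally convex direct limit of complex Banach spaces which are closed under a common continuous bilinear bracket: each E_n = BHol(U_n, 𝔥) for a Banach–Lie algebra 𝔥 with pointwise bracket satisfying ‖[γ, η]‖_∞ ≤ C‖γ‖_∞‖η‖_∞ on each step. Then the pointwise bracket on E is continuous, making E a locally convex topological Lie algebra. -/
/-!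
Compact regularity forces any two steps `E_a`, `E_b` to embed boundedly into a common step
`E_k`: otherwise one builds null sequences in `E_a` and `E_b` whose terms have arbitrarily large
representatives in every step, and their images form a compact subset of `E` that is bounded in
no step. The bracket estimate in `E_k` then yields `d_ab > 0` with
`[f_a x, f_b y] ∈ W` whenever `‖x‖ ‖y‖ < d_ab`. Choosing radii `ε_n > 0` with
`ε_a ε_b ≤ d_ab`, the convex hull `V` of `⋃ f_n (ball 0 ε_n)` is a zero neighbourhood of the
direct limit, and since the bracket is bilinear and `W` convex, `[V, V] ⊆ W`. So the bracket is
continuous at `0`, which for a bilinear map on topological vector spaces means continuous.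
-/

open Filter Set Topology Metric

namespace LinearMap

variable {𝕜 E F G : Type*} [NontriviallyNormedField 𝕜]
  [AddCommGroup E] [Module 𝕜 E] [TopologicalSpace E] [ContinuousSMul 𝕜 E]
  [AddCommGroup F] [Module 𝕜 F] [TopologicalSpace F] [ContinuousSMul 𝕜 F]
  [AddCommGroup G] [Module 𝕜 G] [TopologicalSpace G]

theorem continuousAt_zero_apply_of_continuousAt_zero (B : E →ₗ[𝕜] F →ₗ[𝕜] G)
    (h : ContinuousAt (fun p : E × F => B p.1 p.2) 0) (y : F) :
    ContinuousAt (fun x => B x y) 0 := by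
  intro W hW
  rw [mem_map]
  simp only [map_zero, zero_apply] at hW
  obtain ⟨U, hU, V, hV, hUV⟩ := mem_nhds_prod_iff.1 (h (by simpa using hW))
  -- `y = c • v` with `v ∈ V`, and then `B x y = B (c • x) v`
  obtain ⟨c, hcy, -⟩ :=
    ((absorbent_nhds_zero (𝕜 := 𝕜) hV y).and (Bornology.eventually_ne_cobounded 0)).exists
  obtain ⟨v, hv, rfl⟩ := hcy rfl
  have hcU : (c • · : E → E) ⁻¹' U ∈ 𝓝 0 :=
    (continuous_const_smul c).continuousAt.preimage_mem_nhds (by simpa using hU)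
  filter_upwards [hcU] with x (hx : c • x ∈ U)
  have := hUV (mk_mem_prod hx hv)
  rwa [mem_preimage, map_smul₂, ← map_smul] at this

theorem continuous_of_continuousAt_zero₂ [IsTopologicalAddGroup E] [IsTopologicalAddGroup F]
    [ContinuousAdd G] (B : E →ₗ[𝕜] F →ₗ[𝕜] G)
    (h : ContinuousAt (fun p : E × F => B p.1 p.2) 0) :
    Continuous (fun p : E × F => B p.1 p.2) := by
  refine _root_.continuous_of_continuousAt_zero₂
    (AddMonoidHom.mk' (fun x => (B x).toAddMonoidHom) fun x y => by ext; simp) h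
    (fun x => continuousAt_zero_apply_of_continuousAt_zero B.flip ?_ x)
    (continuousAt_zero_apply_of_continuousAt_zero B h)
  exact h.comp_of_eq continuous_swap.continuousAt rfl

end LinearMap

theorem LinearMap.apply_mem_of_mem_convexHull {𝕜 E F G : Type*} [CommSemiring 𝕜] [SMul ℝ 𝕜]
    [AddCommGroup E] [Module 𝕜 E] [Module ℝ E] [IsScalarTower ℝ 𝕜 E]
    [AddCommGroup F] [Module 𝕜 F] [Module ℝ F] [IsScalarTower ℝ 𝕜 F]
    [AddCommGroup G] [Module 𝕜 G] [Module ℝ G] [IsScalarTower ℝ 𝕜 G]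
    (B : E →ₗ[𝕜] F →ₗ[𝕜] G) {s : Set E} {t : Set F} {W : Set G} (hW : Convex ℝ W)
    (h : ∀ x ∈ s, ∀ y ∈ t, B x y ∈ W) {x : E} (hx : x ∈ convexHull ℝ s) {y : F}
    (hy : y ∈ convexHull ℝ t) : B x y ∈ W := by
  refine convexHull_min (fun y hy => ?_) (hW.linear_preimage ((B x).restrictScalars ℝ)) hy
  exact convexHull_min (fun x hx => h x hx y hy)
    (hW.linear_preimage ((B.flip y).restrictScalars ℝ)) hx

theorem exists_pos_mul_le (d : ℕ → ℕ → ℝ) (hd : ∀ a b, 0 < d a b) :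
    ∃ ε : ℕ → ℝ, (∀ n, 0 < ε n) ∧ ∀ a b, ε a * ε b ≤ d a b := by
  set ε : ℕ → ℝ := fun n => (Finset.range (n + 1)).inf' Finset.nonempty_range_add_one
    fun j => min 1 (min (d j n) (d n j))
  have hε : ∀ {j n}, j ≤ n → ε n ≤ min 1 (min (d j n) (d n j)) := fun h =>
    Finset.inf'_le _ (Finset.mem_range_succ_iff.2 h)
  have hε_pos : ∀ n, 0 < ε n := fun n =>
    (Finset.lt_inf'_iff _).2 fun j _ => lt_min one_pos (lt_min (hd j n) (hd n j))
  refine ⟨ε, hε_pos, fun a b => ?_⟩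
  rcases le_total a b with hab | hba
  · calc ε a * ε b ≤ ε b :=
          mul_le_of_le_one_left (hε_pos b).le ((hε le_rfl).trans (min_le_left _ _))
      _ ≤ d a b := (hε hab).trans ((min_le_right _ _).trans (min_le_left _ _))
  · calc ε a * ε b ≤ ε a :=
          mul_le_of_le_one_right (hε_pos a).le ((hε le_rfl).trans (min_le_left _ _))
      _ ≤ d a b := (hε hba).trans ((min_le_right _ _).trans (min_le_right _ _))

theorem Convex.of_complexToReal {E : Type*} [AddCommGroup E] [Module ℂ E] [Module ℝ E]
    [IsScalarTower ℝ ℂ E] {s : Set E} (hs : letI := Module.complexToReal E; Convex ℝ s) :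
    Convex ℝ s := by
  intro x hx y hy a b ha hb hab
  rw [← algebraMap_smul ℂ a, ← algebraMap_smul ℂ b]
  exact hs hx hy ha hb hab

section DirectLimit

variable {𝕜 E : Type*} [RCLike 𝕜] [AddCommGroup E] [Module 𝕜 E] [TopologicalSpace E]
  {En : ℕ → Type*} [∀ n, NormedAddCommGroup (En n)] [∀ n, NormedSpace 𝕜 (En n)]
  (f : ∀ n, En n →L[𝕜] E)

def LiftsBoundedly (j k : ℕ) : Prop :=
  ∃ c : ℝ, 0 ≤ c ∧ ∀ x : En j, ∃ z : En k, f k z = f j x ∧ ‖z‖ ≤ c * ‖x‖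

variable {f}

theorem exists_norm_le_forall_lift_gt {j k : ℕ} (h : ¬ LiftsBoundedly f j k) {c r : ℝ}
    (hc : 0 ≤ c) (hr : 0 < r) : ∃ u : En j, ‖u‖ ≤ r ∧ ∀ z : En k, f k z = f j u → c < ‖z‖ := by
  simp only [LiftsBoundedly, not_exists, not_and, not_forall, not_le] at h
  obtain ⟨x, hx⟩ := h (c / r) (by positivity)
  have hx0 : 0 < ‖x‖ := norm_pos_iff.2 fun h0 => by simpa [h0] using hx 0
  refine ⟨((r / ‖x‖ : ℝ) : 𝕜) • x, ?_, fun z hz => ?_⟩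
  · rw [norm_smul, RCLike.norm_ofReal, abs_of_pos (by positivity), div_mul_cancel₀ _ hx0.ne']
  have hlift : f k (((‖x‖ / r : ℝ) : 𝕜) • z) = f j x := by
    rw [map_smul, hz, ← map_smul, smul_smul, ← RCLike.ofReal_mul,
      show ‖x‖ / r * (r / ‖x‖) = 1 by field_simp, RCLike.ofReal_one, one_smul]
  have := hx _ hlift
  rw [norm_smul, RCLike.norm_ofReal, abs_of_pos (by positivity)] at this
  rw [div_mul_eq_mul_div, div_mul_eq_mul_div, div_lt_div_iff_of_pos_right hr, mul_comm] at this
  exact lt_of_mul_lt_mul_left this hx0.le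

theorem exists_tendsto_zero_forall_lift_gt (j : ℕ) :
    ∃ u : ℕ → En j, Tendsto u atTop (𝓝 0) ∧ ∀ k m : ℕ, ¬ LiftsBoundedly f j k →
      ∀ z : En k, f k z = f j (u (Nat.pair k m)) → (m : ℝ) < ‖z‖ := by
  have hu : ∀ p : ℕ × ℕ, ∃ u : En j, ‖u‖ ≤ 1 / (Nat.pair p.1 p.2 + 1) ∧
      (¬ LiftsBoundedly f j p.1 → ∀ z : En p.1, f p.1 z = f j u → (p.2 : ℝ) < ‖z‖) := by
    rintro ⟨k, m⟩
    by_cases hk : LiftsBoundedly f j k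
    · exact ⟨0, by rw [norm_zero]; positivity, fun h => (h hk).elim⟩
    · obtain ⟨u, hu, hlift⟩ :=
        exists_norm_le_forall_lift_gt hk m.cast_nonneg Nat.one_div_pos_of_nat
      exact ⟨u, hu, fun _ => hlift⟩
  choose u hu hlift using hu
  refine ⟨fun n => u n.unpair,
    squeeze_zero_norm (fun n => ?_) tendsto_one_div_add_atTop_nhds_zero_nat,
    fun k m hk => by simpa only [Nat.unpair_pair] using hlift (k, m) hk⟩
  simpa only [Nat.pair_unpair] using hu n.unpair

theorem liftsBoundedly_of_isBounded_preimage {j N : ℕ} {u : ℕ → En j}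
    (hu : ∀ m : ℕ, ¬ LiftsBoundedly f j N →
      ∀ z : En N, f N z = f j (u (Nat.pair N m)) → (m : ℝ) < ‖z‖)
    {K : Set E} (huK : ∀ n, f j (u n) ∈ K) (hKN : K ⊆ range (f N))
    (hK : Bornology.IsBounded (f N ⁻¹' K)) : LiftsBoundedly f j N := by
  by_contra hN
  obtain ⟨M, hM⟩ := isBounded_iff_forall_norm_le.1 hK
  obtain ⟨m, hm⟩ := exists_nat_gt M
  obtain ⟨z, hz⟩ := hKN (huK (Nat.pair N m))
  have hz_le : ‖z‖ ≤ M := hM z (by rw [mem_preimage, hz]; exact huK _)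
  linarith [hu m hN z hz]

theorem exists_liftsBoundedly_of_compactRegular
    (hreg : ∀ K : Set E, IsCompact K → ∃ n, K ⊆ range (f n) ∧ IsCompact (f n ⁻¹' K))
    (a b : ℕ) : ∃ k, LiftsBoundedly f a k ∧ LiftsBoundedly f b k := by
  obtain ⟨ua, hua0, hua⟩ := exists_tendsto_zero_forall_lift_gt (f := f) a
  obtain ⟨ub, hub0, hub⟩ := exists_tendsto_zero_forall_lift_gt (f := f) b
  set K := f a '' insert 0 (range ua) ∪ f b '' insert 0 (range ub)
  have hK : IsCompact K := (hua0.isCompact_insert_range.image (f a).continuous).union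
    (hub0.isCompact_insert_range.image (f b).continuous)
  obtain ⟨N, hKN, hNK⟩ := hreg K hK
  exact ⟨N, liftsBoundedly_of_isBounded_preimage (hua N)
      (fun n => Or.inl (mem_image_of_mem _ (mem_insert_of_mem _ (mem_range_self n)))) hKN
      hNK.isBounded,
    liftsBoundedly_of_isBounded_preimage (hub N)
      (fun n => Or.inr (mem_image_of_mem _ (mem_insert_of_mem _ (mem_range_self n)))) hKN
      hNK.isBounded⟩

theorem convexHull_iUnion_image_ball_mem_nhds [Module ℝ E]
    (hfinal : ∀ S : Set E, Convex ℝ S → (S ∈ 𝓝 0 ↔ ∀ n, f n ⁻¹' S ∈ 𝓝 (0 : En n)))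
    {ε : ℕ → ℝ} (hε : ∀ n, 0 < ε n) :
    convexHull ℝ (⋃ n, f n '' ball 0 (ε n)) ∈ 𝓝 (0 : E) := by
  refine (hfinal _ (convex_convexHull ℝ _)).2 fun n =>
    mem_of_superset (ball_mem_nhds 0 (hε n)) fun x hx =>
      subset_convexHull ℝ _ (mem_iUnion_of_mem n (mem_image_of_mem _ hx))

variable {B : E →ₗ[𝕜] E →ₗ[𝕜] E} {Bn : ∀ n, En n →ₗ[𝕜] En n →ₗ[𝕜] En n} {C : ℝ}

theorem exists_pos_forall_bracket_mem (hC : 0 ≤ C)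
    (hbound : ∀ n (x y : En n), ‖Bn n x y‖ ≤ C * ‖x‖ * ‖y‖)
    (hstep : ∀ n (x y : En n), f n (Bn n x y) = B (f n x) (f n y))
    {a b k : ℕ} (ha : LiftsBoundedly f a k) (hb : LiftsBoundedly f b k) {W : Set E}
    (hW : W ∈ 𝓝 0) :
    ∃ d > 0, ∀ (x : En a) (y : En b), ‖x‖ * ‖y‖ < d → B (f a x) (f b y) ∈ W := by
  obtain ⟨ca, hca, hlifta⟩ := ha
  obtain ⟨cb, hcb, hliftb⟩ := hb
  obtain ⟨δ, hδ, hball⟩ := Metric.mem_nhds_iff.1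
    ((f k).continuous.continuousAt.preimage_mem_nhds (by rwa [map_zero]))
  set K := C * ca * cb
  have hK : 0 ≤ K := by positivity
  refine ⟨δ / (K + 1), by positivity, fun x y hxy => ?_⟩
  obtain ⟨x', hx', hx'_le⟩ := hlifta x
  obtain ⟨y', hy', hy'_le⟩ := hliftb y
  rw [← hx', ← hy', ← hstep]
  refine hball (mem_ball_zero_iff.2 ?_)
  calc ‖Bn k x' y'‖ ≤ C * ‖x'‖ * ‖y'‖ := hbound k x' y'
    _ ≤ C * (ca * ‖x‖) * (cb * ‖y‖) := by gcongr
    _ = K * (‖x‖ * ‖y‖) := by ring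
    _ ≤ (K + 1) * (‖x‖ * ‖y‖) := by gcongr; linarith
    _ < (K + 1) * (δ / (K + 1)) := by gcongr
    _ = δ := mul_div_cancel₀ _ (by positivity)

theorem exists_nhds_zero_forall_bracket_mem [Module ℝ E] [IsScalarTower ℝ 𝕜 E]
    (hfinal : ∀ S : Set E, Convex ℝ S → (S ∈ 𝓝 0 ↔ ∀ n, f n ⁻¹' S ∈ 𝓝 (0 : En n)))
    (hreg : ∀ K : Set E, IsCompact K → ∃ n, K ⊆ range (f n) ∧ IsCompact (f n ⁻¹' K))
    (hC : 0 ≤ C) (hbound : ∀ n (x y : En n), ‖Bn n x y‖ ≤ C * ‖x‖ * ‖y‖)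
    (hstep : ∀ n (x y : En n), f n (Bn n x y) = B (f n x) (f n y))
    {W : Set E} (hWc : Convex ℝ W) (hW : W ∈ 𝓝 0) :
    ∃ V ∈ 𝓝 (0 : E), ∀ x ∈ V, ∀ y ∈ V, B x y ∈ W := by
  choose k hka hkb using exists_liftsBoundedly_of_compactRegular hreg
  choose d hd_pos hd using fun a b =>
    exists_pos_forall_bracket_mem hC hbound hstep (hka a b) (hkb a b) hW
  obtain ⟨ε, hε_pos, hε⟩ := exists_pos_mul_le d hd_pos
  refine ⟨_, convexHull_iUnion_image_ball_mem_nhds hfinal hε_pos,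
    fun _ hx _ hy => B.apply_mem_of_mem_convexHull hWc ?_ hx hy⟩
  simp only [mem_iUnion, mem_image, mem_ball_zero_iff]
  rintro _ ⟨a, x, hx, rfl⟩ _ ⟨b, y, hy, rfl⟩
  exact hd a b x y ((mul_lt_mul'' hx hy (norm_nonneg x) (norm_nonneg y)).trans_le (hε a b))

end DirectLimit

theorem stmt19_general {E : Type*} [AddCommGroup E] [Module ℂ E] [TopologicalSpace E]
    [IsTopologicalAddGroup E] [ContinuousSMul ℂ E] [LocallyConvexSpace ℝ E]
    [Module ℝ E] [IsScalarTower ℝ ℂ E]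
    (En : ℕ → Type*) [∀ n, NormedAddCommGroup (En n)] [∀ n, NormedSpace ℂ (En n)]
    (f : ∀ n, En n →L[ℂ] E)
    -- the direct limit topology (finality among convex sets):
    (hfinal : ∀ S : Set E, Convex ℝ S →
      (S ∈ nhds (0 : E) ↔ ∀ n, (f n) ⁻¹' S ∈ nhds (0 : En n)))
    -- compact regularity:
    (hreg : ∀ Cmp : Set E, IsCompact Cmp → ∃ n, Cmp ⊆ Set.range (f n) ∧
      IsCompact ((f n) ⁻¹' Cmp))
    -- the bracket on `E` and its restrictions to the steps:
    (B : E →ₗ[ℂ] E →ₗ[ℂ] E) (Bn : ∀ n, En n →ₗ[ℂ] En n →ₗ[ℂ] En n)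
    {C : ℝ} (hC : 0 ≤ C)
    (hbound : ∀ n (x y : En n), ‖Bn n x y‖ ≤ C * ‖x‖ * ‖y‖)
    (hstep : ∀ n (x y : En n), f n (Bn n x y) = B (f n x) (f n y)) :
    Continuous (fun p : E × E => B p.1 p.2) := by
  refine B.continuous_of_continuousAt_zero₂ fun W hW => ?_
  -- `[LocallyConvexSpace ℝ E]` precedes `[Module ℝ E]`, so it refers to `Module.complexToReal E`
  obtain ⟨W', ⟨hW'0, hW'c⟩, hW'W⟩ :=
    (@LocallyConvexSpace.convex_basis_zero ℝ E _ _ _ (Module.complexToReal E) _ _).mem_iff.1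
      (by simpa using hW)
  obtain ⟨V, hV, hVW⟩ := exists_nhds_zero_forall_bracket_mem hfinal hreg hC hbound hstep
    (Convex.of_complexToReal hW'c) hW'0
  exact mem_map.2 <| mem_of_superset (prod_mem_nhds hV hV) fun p hp => hW'W (hVW _ hp.1 _ hp.2)

/-- On a compactly regular locally convex direct limit `E = ⋃ₙ Eₙ` of Banach
spaces each of which is closed under a common bilinear bracket bounded by `C` on
each step (as for `Eₙ = BHol(Uₙ, 𝔥)` with the pointwise bracket), the bracket of
the limit is continuous, making `E` a locally convex topological Lie algebra. -/
theorem stmt19 {E : Type*} [AddCommGroup E] [Module ℂ E] [TopologicalSpace E]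
    [IsTopologicalAddGroup E] [ContinuousSMul ℂ E] [LocallyConvexSpace ℝ E]
    [Module ℝ E] [IsScalarTower ℝ ℂ E]
    (En : ℕ → Type*) [∀ n, NormedAddCommGroup (En n)] [∀ n, NormedSpace ℂ (En n)]
    [∀ n, CompleteSpace (En n)]
    (f : ∀ n, En n →L[ℂ] E) (hinj : ∀ n, Function.Injective (f n))
    (hmono : ∀ n, Set.range (f n) ⊆ Set.range (f (n + 1)))
    (hunion : (⋃ n, Set.range (f n)) = Set.univ)
    -- the direct limit topology (finality among convex sets):
    (hfinal : ∀ S : Set E, Convex ℝ S →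
      (S ∈ nhds (0 : E) ↔ ∀ n, (f n) ⁻¹' S ∈ nhds (0 : En n)))
    -- compact regularity:
    (hreg : ∀ Cmp : Set E, IsCompact Cmp → ∃ n, Cmp ⊆ Set.range (f n) ∧
      IsCompact ((f n) ⁻¹' Cmp))
    -- the bracket on `E` and its restrictions to the steps:
    (B : E →ₗ[ℂ] E →ₗ[ℂ] E) (Bn : ∀ n, En n →ₗ[ℂ] En n →ₗ[ℂ] En n)
    {C : ℝ} (hC : 0 ≤ C)
    (hbound : ∀ n (x y : En n), ‖Bn n x y‖ ≤ C * ‖x‖ * ‖y‖)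
    (hstep : ∀ n (x y : En n), f n (Bn n x y) = B (f n x) (f n y)) :
    Continuous (fun p : E × E => B p.1 p.2) :=
  stmt19_general En f hfinal hreg B Bn hC hbound hstep
end
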